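/- Let E' be a set of edges of a finite simple graph with open vertex set O, and let F ⊆ E' be a relative spanning forest of E' (a subset containing no nonempty relative cycle, maximal with this property among subsets of E'). Then for every B ⊆ E' there exists a subset A ⊆ F with ∂̊(A) = ∂̊(B). -/

import Mathlib

open scoped symmDiff

section Aux
variable {α : Type*} [DecidableEq α]

lemma odd_card_symmDiff (s t : Finset α) :
    Odd (s ∆ t).card ↔ ¬ (Odd s.card ↔ Odd t.card) := by
  have h1 : (s ∆ t).card = (s \ t).card + (t \ s).card := by
    rw [symmDiff_def, Finset.sup_eq_union, Finset.card_union_of_disjoint]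
    exact disjoint_sdiff_sdiff
  have h2 : s.card = (s \ t).card + (s ∩ t).card := by
    rw [Finset.card_sdiff_add_card_inter]
  have h3 : t.card = (t \ s).card + (t ∩ s).card := by
    rw [Finset.card_sdiff_add_card_inter]
  have h4 : (s ∩ t).card = (t ∩ s).card := by rw [Finset.inter_comm]
  simp only [Nat.odd_iff] at *
  omega

lemma filter_symmDiff' (s t : Finset α) (p : α → Prop) [DecidablePred p] :
    (s ∆ t).filter p = s.filter p ∆ t.filter p := by
  ext a
  simp only [Finset.mem_filter, Finset.mem_symmDiff]
  tauto

end Aux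

/-- The boundary of a set `A` of edges: the set of vertices belonging to an odd
number of edges of `A`. -/
def edgeBoundary {V : Type*} [Fintype V] [DecidableEq V] (A : Finset (Sym2 V)) : Finset V :=
  Finset.univ.filter fun v => Odd (A.filter (fun e => v ∈ e)).card

/-- The relative boundary with respect to a set `O` of open vertices:
`∂̊(A) = ∂(A) \ O`. -/
def relBoundary {V : Type*} [Fintype V] [DecidableEq V] (O : Finset V)
    (A : Finset (Sym2 V)) : Finset V :=
  edgeBoundary A \ O

section Aux2
variable {V : Type*} [Fintype V] [DecidableEq V]

lemma edgeBoundary_symmDiff (A B : Finset (Sym2 V)) :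
    edgeBoundary (A ∆ B) = edgeBoundary A ∆ edgeBoundary B := by
  ext v
  simp only [edgeBoundary, Finset.mem_symmDiff, Finset.mem_filter, Finset.mem_univ, true_and]
  rw [filter_symmDiff', odd_card_symmDiff]
  tauto

lemma relBoundary_symmDiff (O : Finset V) (A B : Finset (Sym2 V)) :
    relBoundary O (A ∆ B) = relBoundary O A ∆ relBoundary O B := by
  rw [relBoundary, edgeBoundary_symmDiff]
  ext v
  simp only [relBoundary, Finset.mem_symmDiff, Finset.mem_sdiff]
  tauto

end Aux2

/-- `F` is a relative spanning forest of the edge set `E'` (with open vertices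
`O`): a subset of `E'` containing no nonempty relative cycle, maximal with this
property among subsets of `E'`. -/
def IsRelSpanningForest {V : Type*} [Fintype V] [DecidableEq V] (O : Finset V)
    (E' F : Finset (Sym2 V)) : Prop :=
  F ⊆ E' ∧ (∀ γ ⊆ F, relBoundary O γ = ∅ → γ = ∅) ∧
    ∀ F', F ⊆ F' → F' ⊆ E' → (∀ γ ⊆ F', relBoundary O γ = ∅ → γ = ∅) → F' = F

section Aux3
variable {V : Type*} [Fintype V] [DecidableEq V]

/-- Rerouting a single edge through the forest. -/
lemma single_edge_reroute (O : Finset V) (E' F : Finset (Sym2 V))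
    (hF : IsRelSpanningForest O E' F) {e : Sym2 V} (he : e ∈ E') :
    ∃ A ⊆ F, relBoundary O A = relBoundary O {e} := by
  obtain ⟨hFE, hnc, hmax⟩ := hF
  by_cases heF : e ∈ F
  · exact ⟨{e}, Finset.singleton_subset_iff.2 heF, rfl⟩
  · -- insert e F must contain a nonempty relative cycle γ, and e ∈ γ
    have hne : insert e F ≠ F := by
      intro h
      exact heF (h ▸ Finset.mem_insert_self e F)
    have : ¬ (∀ γ ⊆ insert e F, relBoundary O γ = ∅ → γ = ∅) := by
      intro h
      exact hne (hmax _ (Finset.subset_insert e F) (Finset.insert_subset he hFE) h)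
    push_neg at this
    obtain ⟨γ, hγsub, hγbd, hγne⟩ := this
    have heγ : e ∈ γ := by
      by_contra heγ
      exact hγne.ne_empty (hnc γ (fun x hx => (Finset.mem_insert.1 (hγsub hx)).resolve_left
        (fun h => heγ (h ▸ hx))) hγbd)
    refine ⟨γ.erase e, fun x hx => ?_, ?_⟩
    · have := hγsub (Finset.mem_of_mem_erase hx)
      rcases Finset.mem_insert.1 this with h | h
      · exact absurd h (Finset.ne_of_mem_erase hx)
      · exact h
    · have key : ({e} : Finset (Sym2 V)) ∆ γ.erase e = γ := by
        ext a
        simp only [Finset.mem_symmDiff, Finset.mem_singleton, Finset.mem_erase]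
        by_cases ha : a = e
        · subst ha; tauto
        · tauto
      have : relBoundary O ({e} : Finset (Sym2 V)) ∆ relBoundary O (γ.erase e) = ∅ := by
        rw [← relBoundary_symmDiff, key, hγbd]
      rw [← Finset.bot_eq_empty, symmDiff_eq_bot] at this
      exact this.symm

end Aux3

/-- Every relative boundary realizable inside an erasure `E'` is realizable
inside a relative spanning forest `F` of `E'`. -/
theorem relBoundary_realizable_in_forest {V : Type*} [Fintype V] [DecidableEq V]
    (G : SimpleGraph V) (O : Finset V)
    (E' F : Finset (Sym2 V)) (hE' : ↑E' ⊆ G.edgeSet)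
    (hF : IsRelSpanningForest O E' F) :
    ∀ B ⊆ E', ∃ A ⊆ F, relBoundary O A = relBoundary O B := by
  intro B
  induction B using Finset.induction_on with
  | empty => exact fun _ => ⟨∅, Finset.empty_subset _, rfl⟩
  | @insert e B' heB' ih =>
    intro hsub
    obtain ⟨A', hA'F, hA'⟩ := ih (fun x hx => hsub (Finset.mem_insert_of_mem hx))
    obtain ⟨Ae, hAeF, hAe⟩ := single_edge_reroute O E' F hF (hsub (Finset.mem_insert_self e B'))
    refine ⟨Ae ∆ A', ?_, ?_⟩
    · intro x hx
      rcases Finset.mem_symmDiff.1 hx with ⟨h, _⟩ | ⟨h, _⟩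
      · exact hAeF h
      · exact hA'F h
    · have hins : insert e B' = ({e} : Finset (Sym2 V)) ∆ B' := by
        ext a
        simp only [Finset.mem_insert, Finset.mem_symmDiff, Finset.mem_singleton]
        by_cases ha : a = e
        · subst ha; tauto
        · tauto
      rw [hins, relBoundary_symmDiff, relBoundary_symmDiff, hAe, hA']
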